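/- Let l12, l13, l23 be positive reals satisfying the strict triangle inequalities, and for w ∈ ℝ³ let l̃ij = exp(wi+wj)·lij; on the open set U ⊆ ℝ³ where l̃ satisfies the strict triangle inequalities let θi(w) ∈ (0,π) be the inner angle at vertex i defined by the law of cosines. Then the Jacobian matrix of the angle map is symmetric at every point of U: ∂θi/∂wj = ∂θj/∂wi for all i, j ∈ {1,2,3}. -/

import Mathlib

/-!
Fix distinct vertices `i, j` with third vertex `k`, and write `A = l̃ᵢⱼ`, `B = l̃ᵢₖ`, `C = l̃ⱼₖ`.
Moving `wⱼ` by `t` multiplies `A` and `C` by `eᵗ` and fixes `B`, so differentiating the law of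
cosines gives `∂θᵢ/∂wⱼ = (B² + C² - A²) / √H = cot θₖ`, where `H` is Heron's product
(`16 · area²`). The right-hand side depends only on the unordered pair `{i, j}`.
-/

/-- Vertex-scaled edge length: `exp (w i + w j) * l i j`. -/
noncomputable def scaledLen (l : Fin 3 → Fin 3 → ℝ) (w : Fin 3 → ℝ) (i j : Fin 3) : ℝ :=
  Real.exp (w i + w j) * l i j

/-- The inner angle at vertex `i` of the vertex-scaled triangle, by the law of cosines. -/
noncomputable def scaledAngle (l : Fin 3 → Fin 3 → ℝ) (i : Fin 3) (w : Fin 3 → ℝ) : ℝ :=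
  Real.arccos ((scaledLen l w i (i + 1) ^ 2 + scaledLen l w i (i + 2) ^ 2
      - scaledLen l w (i + 1) (i + 2) ^ 2) /
    (2 * scaledLen l w i (i + 1) * scaledLen l w i (i + 2)))

open Real

noncomputable def triangleAngle (a b c : ℝ) : ℝ :=
  arccos ((a ^ 2 + b ^ 2 - c ^ 2) / (2 * a * b))

def heronProduct (a b c : ℝ) : ℝ :=
  (a + b + c) * (-a + b + c) * (a - b + c) * (a + b - c)

section TriangleAngle

variable {a b c : ℝ}

lemma heronProduct_rotate (a b c : ℝ) : heronProduct b c a = heronProduct a b c := by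
  unfold heronProduct; ring

lemma heronProduct_pos (ha : a < b + c) (hb : b < c + a) (hc : c < a + b) :
    0 < heronProduct a b c := by
  have h₁ : 0 < a + b + c := by linarith
  have h₂ : 0 < -a + b + c := by linarith
  have h₃ : 0 < a - b + c := by linarith
  have h₄ : 0 < a + b - c := by linarith
  unfold heronProduct
  positivity

lemma triangleAngle_comm (a b c : ℝ) : triangleAngle a b c = triangleAngle b a c := by
  unfold triangleAngle; ring_nf

lemma one_sub_sq_cosineRule (ha : a ≠ 0) (hb : b ≠ 0) :
    1 - ((a ^ 2 + b ^ 2 - c ^ 2) / (2 * a * b)) ^ 2 = heronProduct a b c / (2 * a * b) ^ 2 := by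
  unfold heronProduct; field_simp; ring

lemma abs_cosineRule_lt_one (ha : a < b + c) (hb : b < c + a) (hc : c < a + b) :
    |(a ^ 2 + b ^ 2 - c ^ 2) / (2 * a * b)| < 1 := by
  have ha₀ : 0 < a := by linarith
  have hb₀ : 0 < b := by linarith
  have hH := heronProduct_pos ha hb hc
  have h := one_sub_sq_cosineRule (c := c) ha₀.ne' hb₀.ne'
  have : 0 < heronProduct a b c / (2 * a * b) ^ 2 := by positivity
  rw [← sq_lt_one_iff_abs_lt_one]
  linarith

lemma sin_triangleAngle (ha : a < b + c) (hb : b < c + a) (hc : c < a + b) :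
    sin (triangleAngle a b c) = √(heronProduct a b c) / (2 * a * b) := by
  have hab : 0 < 2 * a * b := by nlinarith
  rw [triangleAngle, sin_arccos, one_sub_sq_cosineRule (by linarith) (by linarith),
    sqrt_div' _ (sq_nonneg _), sqrt_sq hab.le]

lemma cot_triangleAngle (ha : a < b + c) (hb : b < c + a) (hc : c < a + b) :
    cot (triangleAngle a b c) = (a ^ 2 + b ^ 2 - c ^ 2) / √(heronProduct a b c) := by
  have hH := sqrt_pos.2 (heronProduct_pos ha hb hc)
  obtain ⟨h₁, h₂⟩ := abs_lt.1 (abs_cosineRule_lt_one ha hb hc)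
  have ha₀ : a ≠ 0 := by linarith
  have hb₀ : b ≠ 0 := by linarith
  rw [cot_eq_cos_div_sin, sin_triangleAngle ha hb hc, triangleAngle, cos_arccos h₁.le h₂.le]
  field_simp

lemma hasDerivAt_triangleAngle_exp_mul (ha : a < b + c) (hb : b < c + a) (hc : c < a + b) :
    HasDerivAt (fun t => triangleAngle (exp t * a) b (exp t * c))
      (cot (triangleAngle b c a)) 0 := by
  have ha₀ : a ≠ 0 := by linarith
  have hb₀ : b ≠ 0 := by linarith
  have hab : 0 < 2 * a * b := by nlinarith
  have hH := sqrt_pos.2 (heronProduct_pos ha hb hc)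
  obtain ⟨h₁, h₂⟩ := abs_lt.1 (abs_cosineRule_lt_one ha hb hc)
  have hu : HasDerivAt
      (fun t => ((exp t * a) ^ 2 + b ^ 2 - (exp t * c) ^ 2) / (2 * (exp t * a) * b))
      ((a ^ 2 - b ^ 2 - c ^ 2) / (2 * a * b)) 0 := by
    have hea := (hasDerivAt_exp 0).mul_const a
    have hec := (hasDerivAt_exp 0).mul_const c
    refine (((hea.pow 2).add_const (b ^ 2)).sub (hec.pow 2) |>.div
      ((hea.const_mul 2).mul_const b) (by simpa using hab.ne')).congr_deriv ?_
    simp only [exp_zero, one_mul, Pi.sub_apply, Pi.pow_apply]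
    field_simp
    ring
  have harc := hasDerivAt_arccos h₁.ne' h₂.ne
  have hsin := sin_triangleAngle ha hb hc
  rw [triangleAngle, sin_arccos] at hsin
  rw [cot_triangleAngle (by linarith) (by linarith) (by linarith), heronProduct_rotate]
  refine (harc.comp_of_eq 0 hu (by simp)).congr_deriv ?_
  rw [hsin]
  field_simp
  ring

end TriangleAngle

lemma fin_three_add_one_add_one (i : Fin 3) : i + 1 + 1 = i + 2 := by fin_cases i <;> rfl

lemma fin_three_add_one_add_two (i : Fin 3) : i + 1 + 2 = i := by fin_cases i <;> rfl

lemma fin_three_add_two_add_one (i : Fin 3) : i + 2 + 1 = i := by fin_cases i <;> rfl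

lemma fin_three_add_two_add_two (i : Fin 3) : i + 2 + 2 = i + 1 := by fin_cases i <;> rfl

lemma scaledLen_add_smul (l : Fin 3 → Fin 3 → ℝ) (w v : Fin 3 → ℝ) (t : ℝ) (i j : Fin 3) :
    scaledLen l (w + t • v) i j = exp (t * (v i + v j)) * scaledLen l w i j := by
  simp only [scaledLen, Pi.add_apply, Pi.smul_apply, smul_eq_mul, ← mul_assoc, ← exp_add]
  ring_nf

lemma scaledAngle_eq_triangleAngle (l : Fin 3 → Fin 3 → ℝ) (i : Fin 3) (w : Fin 3 → ℝ) :
    scaledAngle l i w = triangleAngle (scaledLen l w i (i + 1)) (scaledLen l w i (i + 2))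
      (scaledLen l w (i + 1) (i + 2)) := rfl

section ScaledTriangle

variable {l : Fin 3 → Fin 3 → ℝ} {w : Fin 3 → ℝ}

lemma scaledLen_comm (hsymm : ∀ i j, l i j = l j i) (i j : Fin 3) :
    scaledLen l w i j = scaledLen l w j i := by
  rw [scaledLen, scaledLen, hsymm, add_comm]

lemma scaledLen_triangle_ineq (hsymm : ∀ i j, l i j = l j i)
    (hw : ∀ i : Fin 3,
      scaledLen l w (i + 1) (i + 2) < scaledLen l w i (i + 1) + scaledLen l w i (i + 2))
    (i : Fin 3) :
    scaledLen l w i (i + 1) < scaledLen l w i (i + 2) + scaledLen l w (i + 1) (i + 2) ∧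
    scaledLen l w i (i + 2) < scaledLen l w (i + 1) (i + 2) + scaledLen l w i (i + 1) ∧
    scaledLen l w (i + 1) (i + 2) < scaledLen l w i (i + 1) + scaledLen l w i (i + 2) := by
  have h₁ := hw (i + 1)
  have h₂ := hw (i + 2)
  rw [fin_three_add_one_add_one, fin_three_add_one_add_two, scaledLen_comm hsymm (i + 1) i,
    scaledLen_comm hsymm (i + 2) i] at h₁
  rw [fin_three_add_two_add_one, fin_three_add_two_add_two, scaledLen_comm hsymm (i + 2) i,
    scaledLen_comm hsymm (i + 2) (i + 1)] at h₂
  exact ⟨by linarith, by linarith, hw i⟩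

lemma differentiableAt_scaledAngle (hsymm : ∀ i j, l i j = l j i)
    (hw : ∀ i : Fin 3,
      scaledLen l w (i + 1) (i + 2) < scaledLen l w i (i + 1) + scaledLen l w i (i + 2))
    (i : Fin 3) : DifferentiableAt ℝ (scaledAngle l i) w := by
  obtain ⟨h₁, h₂, h₃⟩ := scaledLen_triangle_ineq hsymm hw i
  obtain ⟨hlo, hhi⟩ := abs_lt.1 (abs_cosineRule_lt_one h₁ h₂ h₃)
  have hden : 2 * scaledLen l w i (i + 1) * scaledLen l w i (i + 2) ≠ 0 := by
    have : 0 < scaledLen l w i (i + 1) := by linarith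
    have : 0 < scaledLen l w i (i + 2) := by linarith
    positivity
  refine (differentiableAt_arccos.2 ⟨hlo.ne', hhi.ne⟩).comp w ?_
  unfold scaledLen at hden ⊢
  fun_prop (disch := exact hden)

lemma hasLineDerivAt_scaledAngle_succ (hsymm : ∀ i j, l i j = l j i)
    (hw : ∀ i : Fin 3,
      scaledLen l w (i + 1) (i + 2) < scaledLen l w i (i + 1) + scaledLen l w i (i + 2))
    (i : Fin 3) :
    HasLineDerivAt ℝ (scaledAngle l i) (cot (scaledAngle l (i + 2) w)) w
      (Pi.single (i + 1) 1) := by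
  obtain ⟨h₁, h₂, h₃⟩ := scaledLen_triangle_ineq hsymm hw i
  have hline : (fun t : ℝ => scaledAngle l i (w + t • Pi.single (i + 1) 1)) = fun t =>
      triangleAngle (exp t * scaledLen l w i (i + 1)) (scaledLen l w i (i + 2))
        (exp t * scaledLen l w (i + 1) (i + 2)) := by
    funext t
    simp [scaledAngle_eq_triangleAngle, scaledLen_add_smul]
  have hangle : scaledAngle l (i + 2) w = triangleAngle (scaledLen l w i (i + 2))
      (scaledLen l w (i + 1) (i + 2)) (scaledLen l w i (i + 1)) := by
    rw [scaledAngle_eq_triangleAngle, fin_three_add_two_add_one, fin_three_add_two_add_two,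
      scaledLen_comm hsymm (i + 2) i, scaledLen_comm hsymm (i + 2) (i + 1)]
  rw [HasLineDerivAt, hline, hangle]
  exact hasDerivAt_triangleAngle_exp_mul h₁ h₂ h₃

lemma hasLineDerivAt_scaledAngle_add_two (hsymm : ∀ i j, l i j = l j i)
    (hw : ∀ i : Fin 3,
      scaledLen l w (i + 1) (i + 2) < scaledLen l w i (i + 1) + scaledLen l w i (i + 2))
    (i : Fin 3) :
    HasLineDerivAt ℝ (scaledAngle l i) (cot (scaledAngle l (i + 1) w)) w
      (Pi.single (i + 2) 1) := by
  obtain ⟨h₁, h₂, h₃⟩ := scaledLen_triangle_ineq hsymm hw i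
  have hline : (fun t : ℝ => scaledAngle l i (w + t • Pi.single (i + 2) 1)) = fun t =>
      triangleAngle (exp t * scaledLen l w i (i + 2)) (scaledLen l w i (i + 1))
        (exp t * scaledLen l w (i + 1) (i + 2)) := by
    funext t
    rw [triangleAngle_comm]
    simp [scaledAngle_eq_triangleAngle, scaledLen_add_smul]
  have hangle : scaledAngle l (i + 1) w = triangleAngle (scaledLen l w i (i + 1))
      (scaledLen l w (i + 1) (i + 2)) (scaledLen l w i (i + 2)) := by
    rw [scaledAngle_eq_triangleAngle, fin_three_add_one_add_one, fin_three_add_one_add_two,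
      scaledLen_comm hsymm (i + 1) i, scaledLen_comm hsymm (i + 2) i, triangleAngle_comm]
  rw [HasLineDerivAt, hline, hangle]
  exact hasDerivAt_triangleAngle_exp_mul (by linarith) (by linarith) (by linarith)

lemma fderiv_scaledAngle_single_succ_comm (hsymm : ∀ i j, l i j = l j i)
    (hw : ∀ i : Fin 3,
      scaledLen l w (i + 1) (i + 2) < scaledLen l w i (i + 1) + scaledLen l w i (i + 2))
    (i : Fin 3) :
    fderiv ℝ (scaledAngle l i) w (Pi.single (i + 1) 1)
      = fderiv ℝ (scaledAngle l (i + 1)) w (Pi.single i 1) := by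
  have hsucc := hasLineDerivAt_scaledAngle_succ hsymm hw i
  have hadd_two := hasLineDerivAt_scaledAngle_add_two hsymm hw (i + 1)
  rw [fin_three_add_one_add_one, fin_three_add_one_add_two] at hadd_two
  rw [((differentiableAt_scaledAngle hsymm hw i).hasFDerivAt.hasLineDerivAt _).unique hsucc,
    ((differentiableAt_scaledAngle hsymm hw (i + 1)).hasFDerivAt.hasLineDerivAt _).unique
      hadd_two]

end ScaledTriangle

theorem angle_jacobian_symmetric_general
    (l : Fin 3 → Fin 3 → ℝ)
    (hsymm : ∀ i j, l i j = l j i)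
    (w : Fin 3 → ℝ)
    (hw : ∀ i : Fin 3,
      scaledLen l w (i + 1) (i + 2) < scaledLen l w i (i + 1) + scaledLen l w i (i + 2)) :
    (∀ i : Fin 3, DifferentiableAt ℝ (scaledAngle l i) w) ∧
    ∀ i j : Fin 3,
      fderiv ℝ (scaledAngle l i) w (Pi.single j 1)
        = fderiv ℝ (scaledAngle l j) w (Pi.single i 1) := by
  refine ⟨differentiableAt_scaledAngle hsymm hw, fun i j => ?_⟩
  obtain rfl | rfl | rfl : j = i ∨ j = i + 1 ∨ j = i + 2 := by
    revert i j; decide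
  · rfl
  · exact fderiv_scaledAngle_single_succ_comm hsymm hw i
  · have h := fderiv_scaledAngle_single_succ_comm hsymm hw (i + 2)
    rwa [fin_three_add_two_add_one, eq_comm] at h

theorem angle_jacobian_symmetric
    (l : Fin 3 → Fin 3 → ℝ)
    (hsymm : ∀ i j, l i j = l j i)
    (hpos : ∀ i j, i ≠ j → 0 < l i j)
    (htri : ∀ i : Fin 3, l (i + 1) (i + 2) < l i (i + 1) + l i (i + 2))
    (w : Fin 3 → ℝ)
    (hw : ∀ i : Fin 3,
      scaledLen l w (i + 1) (i + 2) < scaledLen l w i (i + 1) + scaledLen l w i (i + 2)) :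
    (∀ i : Fin 3, DifferentiableAt ℝ (scaledAngle l i) w) ∧
    ∀ i j : Fin 3,
      fderiv ℝ (scaledAngle l i) w (Pi.single j 1)
        = fderiv ℝ (scaledAngle l j) w (Pi.single i 1) :=
  angle_jacobian_symmetric_general l hsymm w hw
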